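/- For every n, the quotient of the set of tuples Fin n → ℂ by the equivalence relation identifying a and b whenever there exists a ring automorphism σ : ℂ ≃+* ℂ with σ (a i) = b i for every i, is countable. (The first-order theory of algebraically closed fields of characteristic 0 has only countably many complete types in each finite set of variables.) -/

import Mathlib

/-!
Tuples `a, b` in an uncountable algebraically closed field `K` lie in the same `Aut K`-orbit
as soon as they have the same vanishing ideal in `ℤ[X_i]`. Indeed, both evaluation maps then
factor through the same countable domain `R`, and the two resulting embeddings of `R` are
conjugate: transcendence bases of `K` over either copy of `R` have cardinality `#K`, and
matching them extends the identification of the two copies to an automorphism of `K`.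
As `ℤ[X_1, …, X_n]` is countable and Noetherian, it has only countably many ideals.
-/

open Cardinal MvPolynomial

universe u

instance MvPolynomial.countable {ι R : Type*} [CommSemiring R] [Countable ι] [Countable R] :
    Countable (MvPolynomial ι R) := by
  rw [← mk_le_aleph0_iff]
  exact cardinalMk_le_max_lift.trans (by simp [mk_le_aleph0])

theorem IsNoetherian.countable_submodule {R M : Type*} [Semiring R] [AddCommMonoid M]
    [Module R M] [IsNoetherian R M] [Countable M] : Countable (Submodule R M) := by
  choose s hs using IsNoetherian.noetherian (R := R) (M := M)
  exact Function.Injective.countable (f := s) fun N N' h => by rw [← hs N, ← hs N', h]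

theorem ker_aeval_ringEquiv_comp {ι K L : Type*} [CommRing K] [CommRing L] (σ : K ≃+* L)
    (a : ι → K) : RingHom.ker (aeval (R := ℤ) (σ ∘ a)) = RingHom.ker (aeval (R := ℤ) a) := by
  ext p
  have : σ (aeval a p) = aeval (σ ∘ a) p := comp_aeval_apply a (σ : K →+* L).toIntAlgHom p
  simp only [RingHom.mem_ker, ← this, map_eq_zero_iff _ σ.injective]

namespace IsAlgClosed

theorem equivOfTranscendenceBasis_algebraMap {R K L ι κ : Type*} [CommRing R] [Field K]
    [Field L] [Algebra R K] [Algebra R L] [IsAlgClosed K] [IsAlgClosed L]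
    {v : ι → K} {w : κ → L} (e : ι ≃ κ) (hv : IsTranscendenceBasis R v)
    (hw : IsTranscendenceBasis R w) (r : R) :
    equivOfTranscendenceBasis v w e hv hw (algebraMap R K r) = algebraMap R L r := by
  let := isAlgClosure_of_transcendence_basis v hv
  let := isAlgClosure_of_transcendence_basis w hw
  rw [IsScalarTower.algebraMap_apply R (Algebra.adjoin R (Set.range v)) K]
  unfold equivOfTranscendenceBasis
  simp only [IsAlgClosure.equivOfEquiv_algebraMap, RingEquiv.trans_apply, AlgEquiv.coe_ringEquiv,
    AlgEquiv.commutes]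
  rw [← IsScalarTower.algebraMap_apply]

section

variable {R : Type*} {K L : Type u} [CommRing R] [Countable R] [Field K] [Field L]
  [IsAlgClosed K] [IsAlgClosed L]

theorem exists_ringEquiv_comp_eq_of_injective (hK : ℵ₀ < #K) (hKL : #K = #L)
    {f : R →+* K} {g : R →+* L} (hf : Function.Injective f) (hg : Function.Injective g) :
    ∃ σ : K ≃+* L, (σ : K →+* L).comp f = g := by
  let := f.toAlgebra
  let := g.toAlgebra
  have : Nontrivial R := f.domain_nontrivial
  have : FaithfulSMul R K := (faithfulSMul_iff_algebraMap_injective R K).2 hf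
  have : FaithfulSMul R L := (faithfulSMul_iff_algebraMap_injective R L).2 hg
  obtain ⟨s, hs⟩ := exists_isTranscendenceBasis R K
  obtain ⟨t, ht⟩ := exists_isTranscendenceBasis R L
  have hR : #R ≤ ℵ₀ := mk_le_aleph0
  have hst : #s = #t := by
    have hKs := cardinal_eq_cardinal_transcendence_basis_of_aleph0_lt _ hs hR hK
    have hLt := cardinal_eq_cardinal_transcendence_basis_of_aleph0_lt _ ht hR (hKL ▸ hK)
    simp only [lift_id] at hKs hLt
    rw [← hKs, ← hLt, hKL]
  obtain ⟨e⟩ := Cardinal.eq.1 hst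
  exact ⟨equivOfTranscendenceBasis _ _ e hs ht,
    RingHom.ext (equivOfTranscendenceBasis_algebraMap e hs ht)⟩

theorem exists_ringEquiv_comp_eq_of_ker_eq (hK : ℵ₀ < #K) (hKL : #K = #L)
    {f : R →+* K} {g : R →+* L} (h : RingHom.ker f = RingHom.ker g) :
    ∃ σ : K ≃+* L, (σ : K →+* L).comp f = g := by
  have : Countable (R ⧸ RingHom.ker f) := Ideal.Quotient.mk_surjective.countable
  obtain ⟨σ, hσ⟩ := exists_ringEquiv_comp_eq_of_injective hK hKL (RingHom.kerLift_injective f)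
    (RingHom.lift_injective_of_ker_le_ideal _ (fun r hr => RingHom.mem_ker.1 (h ▸ hr)) h.ge)
  exact ⟨σ, RingHom.ext fun r => RingHom.congr_fun hσ (Ideal.Quotient.mk _ r)⟩

end

theorem countable_quot_ringAut_orbits {ι K : Type*} [Finite ι] [Field K] [IsAlgClosed K]
    (hK : ℵ₀ < #K) :
    Countable (Quot fun a b : ι → K => ∃ σ : K ≃+* K, ∀ i, σ (a i) = b i) := by
  have := IsNoetherian.countable_submodule (R := MvPolynomial ι ℤ) (M := MvPolynomial ι ℤ)
  let F : (ι → K) → Ideal (MvPolynomial ι ℤ) := fun a => RingHom.ker (aeval a)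
  have hF : ∀ a b : ι → K, (∃ σ : K ≃+* K, ∀ i, σ (a i) = b i) → F a = F b := by
    rintro a b ⟨σ, hσ⟩
    rw [← funext hσ]
    exact (ker_aeval_ringEquiv_comp σ a).symm
  refine Function.Injective.countable (f := Quot.lift F hF) fun x y => ?_
  induction x using Quot.ind with | _ a =>
  induction y using Quot.ind with | _ b =>
  intro h
  obtain ⟨σ, hσ⟩ := exists_ringEquiv_comp_eq_of_ker_eq hK rfl h
  exact Quot.sound ⟨σ, fun i => by simpa using RingHom.congr_fun hσ (X i)⟩

end IsAlgClosed

/-- The quotient of the set of `n`-tuples of complex numbers by the orbit equivalence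
relation of the diagonal action of the automorphism group of `ℂ` (identifying `a` and `b`
whenever some ring automorphism `σ` of `ℂ` satisfies `σ (a i) = b i` for all `i`) is
countable: `ACF₀` has only countably many complete types in each finite set of
variables. -/
theorem countable_quot_ringAut_orbits (n : ℕ) :
    Countable (Quot fun a b : Fin n → ℂ => ∃ σ : ℂ ≃+* ℂ, ∀ i, σ (a i) = b i) :=
  IsAlgClosed.countable_quot_ringAut_orbits (by rw [mk_complex]; exact aleph0_lt_continuum)
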